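/- Under the hypotheses of the hump destruction lemma (a, b, c ∈ W^{1,p}(Ω) ∩ L^q(Ω) with pairwise disjoint supports, b, c ≢ 0, 1 < p < q, and ‖b‖_{W^{1,p}}^p/‖b‖_{L^q}^q ≥ ‖c‖_{W^{1,p}}^p/‖c‖_{L^q}^q), setting t = (‖b‖_{L^q}^q + ‖c‖_{L^q}^q)^{1/q}/‖c‖_{L^q}, one has the quantitative gap ‖a+b+c‖_{W^{1,p}}^p − ‖a + t·c‖_{W^{1,p}}^p ≥ ‖b‖_{W^{1,p}}^p + ‖c‖_{W^{1,p}}^p − (1 + (‖b‖_{L^q}/‖c‖_{L^q})^q)^{p/q}‖c‖_{W^{1,p}}^p > 0. -/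

import Mathlib

/-!
Disjointness of the supports makes the energy `∫_Ω ‖∇f‖^p + |f|^p` additive, because a function
has vanishing derivative almost everywhere on its zero set: near a zero `x` where `L = f'(x) ≠ 0`,
`f` is positive on balls `B(x + r v, η r)` with `L v = 1`, so `x` cannot be a Lebesgue point of the
zero set. Hence `E(u) = E(a) + E(b) + E(c)` and `E(U) = E(a) + (1 + s)^{p/q} E(c)` with
`s = ‖b‖_q^q / ‖c‖_q^q`. The ratio hypothesis says `E(b) ≥ s E(c)`, and `(1 + s)^{p/q} < 1 + s`
because `p < q`.
-/

open MeasureTheory Set Function Metric Filter Topology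

variable {E : Type*} [NormedAddCommGroup E] [NormedSpace ℝ E]

theorem HasFDerivAt.eventually_lt_on_closedBall {f : E → ℝ} {L : E →L[ℝ] ℝ} {x v : E}
    (hf : HasFDerivAt f L x) (hv : L v = 1) :
    ∃ η > 0, ∀ᶠ r in 𝓝[>] (0 : ℝ), ∀ y ∈ closedBall (x + r • v) (η * r), f x < f y := by
  set η : ℝ := 1 / (4 * (‖L‖ + 1))
  have hη : 0 < η := by positivity
  have hη1 : η ≤ 1 := by
    rw [div_le_one (by positivity)]; linarith [norm_nonneg L]
  have hLη : ‖L‖ * η ≤ 1 / 4 := by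
    rw [mul_one_div, div_le_div_iff₀ (by positivity) (by norm_num)]; linarith
  obtain ⟨ρ, hρ, hlin⟩ := Metric.eventually_nhds_iff.1
    (hf.isLittleO.def (show 0 < 1 / (4 * (‖v‖ + 1)) by positivity))
  refine ⟨η, hη, mem_of_superset (Ioo_mem_nhdsGT (show 0 < ρ / (‖v‖ + 1) by positivity)) ?_⟩
  rintro r ⟨hr, hrρ⟩ y hy
  rw [mem_closedBall, dist_eq_norm] at hy
  have hyx : ‖y - x‖ ≤ r * (‖v‖ + 1) :=
    calc ‖y - x‖ = ‖(y - (x + r • v)) + r • v‖ := by congr 1; abel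
      _ ≤ η * r + r * ‖v‖ := by
        grw [norm_add_le, hy, norm_smul, Real.norm_of_nonneg hr.le]
      _ ≤ r * (‖v‖ + 1) := by nlinarith
  have hLyx : 3 / 4 * r ≤ L (y - x) := by
    have hsplit : L (y - x) = L (y - (x + r • v)) + r := by
      have hrv : L (r • v) = r := by rw [L.map_smul, hv, smul_eq_mul, mul_one]
      simp only [map_sub, map_add, hrv]; ring
    have := (abs_le.1 ((L.le_opNorm _).trans (mul_le_mul_of_nonneg_left hy (norm_nonneg L)))).1
    nlinarith
  have herr : ‖f y - f x - L (y - x)‖ ≤ 1 / (4 * (‖v‖ + 1)) * ‖y - x‖ :=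
    hlin (by rw [dist_eq_norm]; rw [lt_div_iff₀ (by positivity)] at hrρ; linarith)
  have herr' : 1 / (4 * (‖v‖ + 1)) * ‖y - x‖ ≤ r / 4 := by
    rw [div_mul_eq_mul_div, one_mul, div_le_div_iff₀ (by positivity) (by norm_num)]; nlinarith
  have := (abs_le.1 (Real.norm_eq_abs _ ▸ herr)).1
  linarith

theorem ContinuousLinearMap.exists_apply_eq_one {L : E →L[ℝ] ℝ} (hL : L ≠ 0) : ∃ v, L v = 1 := by
  obtain ⟨w, hw⟩ : ∃ w, L w ≠ 0 := by
    by_contra! h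
    exact hL (ContinuousLinearMap.ext h)
  exact ⟨(L w)⁻¹ • w, by rw [L.map_smul, smul_eq_mul, inv_mul_cancel₀ hw]⟩

theorem ae_fderiv_eq_zero_of_eq_zero [MeasurableSpace E] [BorelSpace E] [SecondCountableTopology E]
    (μ : Measure E) [IsUnifLocDoublingMeasure μ] [IsLocallyFiniteMeasure μ] (f : E → ℝ) :
    ∀ᵐ x ∂μ, f x = 0 → fderiv ℝ f x = 0 := by
  set Z := {x | f x = 0 ∧ fderiv ℝ f x ≠ 0}
  -- The dilation constant `K` has to be fixed before `x`, so take all `K : ℕ` at once.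
  have hdens := ae_all_iff.2 fun K : ℕ =>
    IsUnifLocDoublingMeasure.ae_tendsto_measure_inter_div μ Z K
  refine ae_iff.2 ?_
  simp only [Classical.not_imp]
  rw [← Measure.restrict_apply_self]
  refine measure_mono_null ?_ (ae_iff.1 hdens)
  rintro x ⟨hfx, hL⟩ hP
  have hf : HasFDerivAt f (fderiv ℝ f x) x :=
    (not_imp_comm.1 fderiv_zero_of_not_differentiableAt hL).hasFDerivAt
  obtain ⟨v, hv⟩ := ContinuousLinearMap.exists_apply_eq_one hL
  obtain ⟨η, hη, hpos⟩ := hf.eventually_lt_on_closedBall hv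
  have hδ : Tendsto (fun r : ℝ => η * r) (𝓝[>] 0) (𝓝[>] 0) := by
    refine tendsto_nhdsWithin_iff.2 ⟨?_, eventually_nhdsWithin_of_forall fun r hr => mul_pos hη hr⟩
    simpa using ((continuous_const_mul η).tendsto 0).mono_left nhdsWithin_le_nhds
  have hcenter : ∀ᶠ r in 𝓝[>] (0 : ℝ),
      x ∈ closedBall (x + r • v) ((⌈‖v‖ / η⌉₊ : ℕ) * (η * r)) := by
    refine eventually_nhdsWithin_of_forall fun r (hr : 0 < r) => ?_
    rw [mem_closedBall, dist_comm, dist_self_add_left, norm_smul, Real.norm_of_nonneg hr.le,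
      ← mul_assoc, mul_comm _ r]
    gcongr
    exact (div_le_iff₀ hη).1 (Nat.le_ceil _)
  have hone := hP ⌈‖v‖ / η⌉₊ (fun r => x + r • v) (fun r => η * r) hδ hcenter
  have hzero : ∀ᶠ r in 𝓝[>] (0 : ℝ),
      μ (Z ∩ closedBall (x + r • v) (η * r)) / μ (closedBall (x + r • v) (η * r)) = 0 := by
    filter_upwards [hpos] with r hr
    have hempty : Z ∩ closedBall (x + r • v) (η * r) = ∅ :=
      eq_empty_of_forall_notMem fun y hy => (hr y hy.2).ne' (hy.1.1.trans hfx.symm)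
    rw [hempty, measure_empty, ENNReal.zero_div]
  exact zero_ne_one <|
    tendsto_nhds_unique (tendsto_const_nhds.congr' (hzero.mono fun _ => Eq.symm)) hone

section SobolevIntegrand

variable {p : ℝ} {f g : E → ℝ}

noncomputable def sobolevIntegrand (p : ℝ) (f : E → ℝ) (x : E) : ℝ :=
  ‖fderiv ℝ f x‖ ^ p + |f x| ^ p

theorem sobolevIntegrand_add (hp : p ≠ 0) {x : E} (hf : DifferentiableAt ℝ f x)
    (hg : DifferentiableAt ℝ g x) (hfg : f x = 0 ∨ g x = 0)
    (hf₀ : f x = 0 → fderiv ℝ f x = 0) (hg₀ : g x = 0 → fderiv ℝ g x = 0) :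
    sobolevIntegrand p (fun y => f y + g y) x
      = sobolevIntegrand p f x + sobolevIntegrand p g x := by
  unfold sobolevIntegrand
  rw [fderiv_fun_add hf hg]
  rcases hfg with h | h <;> simp [h, hf₀, hg₀, Real.zero_rpow hp]

theorem sobolevIntegrand_const_mul {t : ℝ} (ht : 0 ≤ t) {x : E} (hf : DifferentiableAt ℝ f x) :
    sobolevIntegrand p (fun y => t * f y) x = t ^ p * sobolevIntegrand p f x := by
  unfold sobolevIntegrand
  rw [fderiv_const_mul hf, norm_smul, abs_mul, Real.norm_of_nonneg ht, abs_of_nonneg ht,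
    Real.mul_rpow ht (norm_nonneg _), Real.mul_rpow ht (abs_nonneg _), mul_add]

variable [MeasurableSpace E] {μ : Measure E} {Ω : Set E}

theorem setIntegral_sobolevIntegrand_pos {q : ℝ} (hq : q ≠ 0)
    (hfi : IntegrableOn (sobolevIntegrand p f) Ω μ) (hf : ∫ x in Ω, |f x| ^ q ∂μ ≠ 0) :
    0 < ∫ x in Ω, sobolevIntegrand p f x ∂μ := by
  have hfq := (integral_nonneg fun x => by positivity).lt_of_ne' hf
  rw [integral_pos_iff_support_of_nonneg (fun x => by positivity)
    (Integrable.of_integral_ne_zero hf)] at hfq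
  refine (integral_pos_iff_support_of_nonneg (fun x => by unfold sobolevIntegrand; positivity)
    hfi).2 (hfq.trans_le (measure_mono fun x hx => ?_))
  have hfx : f x ≠ 0 := fun h => hx (by simp [h, Real.zero_rpow hq])
  have : 0 < |f x| ^ p := Real.rpow_pos_of_pos (abs_pos.2 hfx) p
  exact (show 0 < sobolevIntegrand p f x by unfold sobolevIntegrand; positivity).ne'

variable [BorelSpace E]

theorem setIntegral_sobolevIntegrand_const_mul {t : ℝ} (ht : 0 ≤ t) (hΩ : IsOpen Ω)
    (hf : DifferentiableOn ℝ f Ω) :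
    ∫ x in Ω, sobolevIntegrand p (fun y => t * f y) x ∂μ
      = t ^ p * ∫ x in Ω, sobolevIntegrand p f x ∂μ := by
  rw [setIntegral_congr_fun hΩ.measurableSet
    fun x hx => sobolevIntegrand_const_mul ht (hf.differentiableAt (hΩ.mem_nhds hx)),
    integral_const_mul]

theorem integrableOn_sobolevIntegrand_const_mul {t : ℝ} (ht : 0 ≤ t) (hΩ : IsOpen Ω)
    (hf : DifferentiableOn ℝ f Ω) (hfi : IntegrableOn (sobolevIntegrand p f) Ω μ) :
    IntegrableOn (sobolevIntegrand p (fun y => t * f y)) Ω μ :=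
  IntegrableOn.congr_fun (hfi.const_mul (t ^ p))
    (fun _ hx => (sobolevIntegrand_const_mul ht (hf.differentiableAt (hΩ.mem_nhds hx))).symm)
    hΩ.measurableSet

variable [SecondCountableTopology E]
  [IsUnifLocDoublingMeasure μ] [IsLocallyFiniteMeasure μ]

theorem ae_sobolevIntegrand_add (hp : p ≠ 0) (hΩ : IsOpen Ω) (hf : DifferentiableOn ℝ f Ω)
    (hg : DifferentiableOn ℝ g Ω) (hfg : Disjoint (support f) (support g)) :
    ∀ᵐ x ∂μ.restrict Ω,
      sobolevIntegrand p (fun y => f y + g y) x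
      = sobolevIntegrand p f x + sobolevIntegrand p g x := by
  filter_upwards [ae_restrict_mem hΩ.measurableSet,
    ae_restrict_of_ae (ae_fderiv_eq_zero_of_eq_zero μ f),
    ae_restrict_of_ae (ae_fderiv_eq_zero_of_eq_zero μ g)] with x hx hf₀ hg₀
  refine sobolevIntegrand_add hp (hf.differentiableAt (hΩ.mem_nhds hx))
    (hg.differentiableAt (hΩ.mem_nhds hx)) ?_ hf₀ hg₀
  by_contra! h
  exact disjoint_left.1 hfg h.1 h.2

theorem integrableOn_sobolevIntegrand_add (hp : p ≠ 0) (hΩ : IsOpen Ω)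
    (hf : DifferentiableOn ℝ f Ω) (hg : DifferentiableOn ℝ g Ω)
    (hfg : Disjoint (support f) (support g)) (hfi : IntegrableOn (sobolevIntegrand p f) Ω μ)
    (hgi : IntegrableOn (sobolevIntegrand p g) Ω μ) :
    IntegrableOn (sobolevIntegrand p (fun y => f y + g y)) Ω μ :=
  (hfi.add hgi).congr (Filter.EventuallyEq.symm (ae_sobolevIntegrand_add hp hΩ hf hg hfg))

theorem integral_sobolevIntegrand_add (hp : p ≠ 0) (hΩ : IsOpen Ω)
    (hf : DifferentiableOn ℝ f Ω) (hg : DifferentiableOn ℝ g Ω)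
    (hfg : Disjoint (support f) (support g)) (hfi : IntegrableOn (sobolevIntegrand p f) Ω μ)
    (hgi : IntegrableOn (sobolevIntegrand p g) Ω μ) :
    ∫ x in Ω, sobolevIntegrand p (fun y => f y + g y) x ∂μ
      = (∫ x in Ω, sobolevIntegrand p f x ∂μ) + ∫ x in Ω, sobolevIntegrand p g x ∂μ := by
  rw [integral_congr_ae (ae_sobolevIntegrand_add hp hΩ hf hg hfg), integral_add hfi hgi]

theorem integral_sobolevIntegrand_add_add {h : E → ℝ} (hp : p ≠ 0) (hΩ : IsOpen Ω)
    (hf : DifferentiableOn ℝ f Ω) (hg : DifferentiableOn ℝ g Ω) (hh : DifferentiableOn ℝ h Ω)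
    (hfg : Disjoint (support f) (support g)) (hfh : Disjoint (support f) (support h))
    (hgh : Disjoint (support g) (support h)) (hfi : IntegrableOn (sobolevIntegrand p f) Ω μ)
    (hgi : IntegrableOn (sobolevIntegrand p g) Ω μ)
    (hhi : IntegrableOn (sobolevIntegrand p h) Ω μ) :
    ∫ x in Ω, sobolevIntegrand p (fun y => f y + g y + h y) x ∂μ
      = (∫ x in Ω, sobolevIntegrand p f x ∂μ) + (∫ x in Ω, sobolevIntegrand p g x ∂μ)
        + ∫ x in Ω, sobolevIntegrand p h x ∂μ := by
  rw [integral_sobolevIntegrand_add hp hΩ (hf.fun_add hg) hh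
    ((hfh.sup_left hgh).mono_left (support_add f g))
    (integrableOn_sobolevIntegrand_add hp hΩ hf hg hfg hfi hgi) hhi,
    integral_sobolevIntegrand_add hp hΩ hf hg hfg hfi hgi]

theorem integral_sobolevIntegrand_add_const_mul {t : ℝ} (hp : p ≠ 0) (ht : 0 ≤ t)
    (hΩ : IsOpen Ω) (hf : DifferentiableOn ℝ f Ω) (hg : DifferentiableOn ℝ g Ω)
    (hfg : Disjoint (support f) (support g)) (hfi : IntegrableOn (sobolevIntegrand p f) Ω μ)
    (hgi : IntegrableOn (sobolevIntegrand p g) Ω μ) :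
    ∫ x in Ω, sobolevIntegrand p (fun y => f y + t * g y) x ∂μ
      = (∫ x in Ω, sobolevIntegrand p f x ∂μ) + t ^ p * ∫ x in Ω, sobolevIntegrand p g x ∂μ := by
  rw [integral_sobolevIntegrand_add hp hΩ hf (hg.const_mul t)
    (hfg.mono_right (support_mul_subset_right (fun _ => t) g)) hfi
    (integrableOn_sobolevIntegrand_const_mul ht hΩ hg hgi),
    setIntegral_sobolevIntegrand_const_mul ht hΩ hg]

end SobolevIntegrand

theorem one_add_rpow_mul_lt {r s B C : ℝ} (hr : r < 1) (hs : 0 < s) (hC : 0 < C)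
    (hB : s * C ≤ B) : (1 + s) ^ r * C < B + C := by
  have := Real.rpow_lt_self_of_one_lt (by linarith : 1 < 1 + s) hr
  nlinarith

theorem hump_destruction_quantitative_general
    (n : ℕ) (Ω : Set (Fin n → ℝ)) (hΩ_open : IsOpen Ω)
    (p q : ℝ) (hp : 1 < p) (hpq : p < q)
    (a b c : (Fin n → ℝ) → ℝ)
    (ha_diff : DifferentiableOn ℝ a Ω) (hb_diff : DifferentiableOn ℝ b Ω)
    (hc_diff : DifferentiableOn ℝ c Ω)
    (ha_W : IntegrableOn (fun x => ‖fderiv ℝ a x‖ ^ p + |a x| ^ p) Ω)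
    (hb_W : IntegrableOn (fun x => ‖fderiv ℝ b x‖ ^ p + |b x| ^ p) Ω)
    (hc_W : IntegrableOn (fun x => ‖fderiv ℝ c x‖ ^ p + |c x| ^ p) Ω)
    (hab : Disjoint (support a) (support b))
    (hac : Disjoint (support a) (support c))
    (hbc : Disjoint (support b) (support c))
    (hb_ne : ∫ x in Ω, |b x| ^ q ≠ 0) (hc_ne : ∫ x in Ω, |c x| ^ q ≠ 0)
    (hratio : (∫ x in Ω, (‖fderiv ℝ b x‖ ^ p + |b x| ^ p)) / (∫ x in Ω, |b x| ^ q)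
        ≥ (∫ x in Ω, (‖fderiv ℝ c x‖ ^ p + |c x| ^ p)) / (∫ x in Ω, |c x| ^ q)) :
    letI t : ℝ := ((∫ x in Ω, |b x| ^ q) + (∫ x in Ω, |c x| ^ q)) ^ (1 / q)
        / (∫ x in Ω, |c x| ^ q) ^ (1 / q)
    letI u : (Fin n → ℝ) → ℝ := fun x => a x + b x + c x
    letI U : (Fin n → ℝ) → ℝ := fun x => a x + t * c x
    letI gap : ℝ := (∫ x in Ω, (‖fderiv ℝ b x‖ ^ p + |b x| ^ p))
        + (∫ x in Ω, (‖fderiv ℝ c x‖ ^ p + |c x| ^ p))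
        - (1 + (∫ x in Ω, |b x| ^ q) / (∫ x in Ω, |c x| ^ q)) ^ (p / q)
            * (∫ x in Ω, (‖fderiv ℝ c x‖ ^ p + |c x| ^ p))
    (∫ x in Ω, (‖fderiv ℝ u x‖ ^ p + |u x| ^ p))
        - (∫ x in Ω, (‖fderiv ℝ U x‖ ^ p + |U x| ^ p)) ≥ gap ∧ 0 < gap := by
  beta_reduce
  set Bq := ∫ x in Ω, |b x| ^ q
  set Cq := ∫ x in Ω, |c x| ^ q
  set t := (Bq + Cq) ^ (1 / q) / Cq ^ (1 / q) with ht_def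
  set A := ∫ x in Ω, (‖fderiv ℝ a x‖ ^ p + |a x| ^ p)
  set B := ∫ x in Ω, (‖fderiv ℝ b x‖ ^ p + |b x| ^ p)
  set C := ∫ x in Ω, (‖fderiv ℝ c x‖ ^ p + |c x| ^ p)
  have hp₀ : p ≠ 0 := (zero_lt_one.trans hp).ne'
  have hBq : 0 < Bq := (integral_nonneg fun x => by positivity).lt_of_ne' hb_ne
  have hCq : 0 < Cq := (integral_nonneg fun x => by positivity).lt_of_ne' hc_ne
  have hu : ∫ x in Ω, sobolevIntegrand p (fun x => a x + b x + c x) x = A + B + C :=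
    integral_sobolevIntegrand_add_add hp₀ hΩ_open ha_diff hb_diff hc_diff hab hac hbc ha_W hb_W hc_W
  have hU : ∫ x in Ω, sobolevIntegrand p (fun x => a x + t * c x) x = A + t ^ p * C :=
    integral_sobolevIntegrand_add_const_mul hp₀ (by positivity) hΩ_open ha_diff hc_diff hac
      ha_W hc_W
  simp only [sobolevIntegrand] at hu hU
  have htp : t ^ p = (1 + Bq / Cq) ^ (p / q) := by
    rw [ht_def, ← Real.div_rpow (by positivity) hCq.le, ← Real.rpow_mul (by positivity),
      add_div, div_self hCq.ne', add_comm, one_div_mul_eq_div]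
  have hC : 0 < C :=
    setIntegral_sobolevIntegrand_pos (zero_lt_one.trans (hp.trans hpq)).ne' hc_W hc_ne
  have hB : Bq / Cq * C ≤ B := by
    rw [ge_iff_le, div_le_div_iff₀ hCq hBq] at hratio
    rw [div_mul_eq_mul_div, div_le_iff₀ hCq]
    linarith
  have hgap := one_add_rpow_mul_lt ((div_lt_one (by linarith)).2 hpq) (div_pos hBq hCq) hC hB
  rw [hu, hU, htp]
  constructor <;> linarith

/-- The hump destruction lemma: let `Ω ⊆ ℝⁿ` be a domain, `1 < p < q < ∞`, and let
`a, b, c ∈ W^{1,p}(Ω) ∩ L^q(Ω)` have pairwise disjoint supports, with `b ≢ 0`, `c ≢ 0`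
and `‖b‖_{W^{1,p}}^p / ‖b‖_{L^q}^q ≥ ‖c‖_{W^{1,p}}^p / ‖c‖_{L^q}^q`. Set `u = a + b + c`
and `U = a + t c`, `t = (‖b‖_{L^q}^q + ‖c‖_{L^q}^q)^{1/q} / ‖c‖_{L^q}`. Then
`∫_Ω |U|^q = ∫_Ω |u|^q` and `‖U‖_{W^{1,p}}^p < ‖u‖_{W^{1,p}}^p`. -/
theorem hump_destruction_quantitative
    (n : ℕ) (Ω : Set (Fin n → ℝ)) (hΩ_open : IsOpen Ω) (hΩ_conn : IsConnected Ω)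
    (p q : ℝ) (hp : 1 < p) (hpq : p < q)
    (a b c : (Fin n → ℝ) → ℝ)
    (ha_diff : DifferentiableOn ℝ a Ω) (hb_diff : DifferentiableOn ℝ b Ω)
    (hc_diff : DifferentiableOn ℝ c Ω)
    (ha_W : IntegrableOn (fun x => ‖fderiv ℝ a x‖ ^ p + |a x| ^ p) Ω)
    (hb_W : IntegrableOn (fun x => ‖fderiv ℝ b x‖ ^ p + |b x| ^ p) Ω)
    (hc_W : IntegrableOn (fun x => ‖fderiv ℝ c x‖ ^ p + |c x| ^ p) Ω)
    (ha_Lq : IntegrableOn (fun x => |a x| ^ q) Ω)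
    (hb_Lq : IntegrableOn (fun x => |b x| ^ q) Ω)
    (hc_Lq : IntegrableOn (fun x => |c x| ^ q) Ω)
    (hab : Disjoint (support a) (support b))
    (hac : Disjoint (support a) (support c))
    (hbc : Disjoint (support b) (support c))
    (hb_ne : ∫ x in Ω, |b x| ^ q ≠ 0) (hc_ne : ∫ x in Ω, |c x| ^ q ≠ 0)
    (hratio : (∫ x in Ω, (‖fderiv ℝ b x‖ ^ p + |b x| ^ p)) / (∫ x in Ω, |b x| ^ q)
        ≥ (∫ x in Ω, (‖fderiv ℝ c x‖ ^ p + |c x| ^ p)) / (∫ x in Ω, |c x| ^ q)) :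
    letI t : ℝ := ((∫ x in Ω, |b x| ^ q) + (∫ x in Ω, |c x| ^ q)) ^ (1 / q)
        / (∫ x in Ω, |c x| ^ q) ^ (1 / q)
    letI u : (Fin n → ℝ) → ℝ := fun x => a x + b x + c x
    letI U : (Fin n → ℝ) → ℝ := fun x => a x + t * c x
    letI gap : ℝ := (∫ x in Ω, (‖fderiv ℝ b x‖ ^ p + |b x| ^ p))
        + (∫ x in Ω, (‖fderiv ℝ c x‖ ^ p + |c x| ^ p))
        - (1 + (∫ x in Ω, |b x| ^ q) / (∫ x in Ω, |c x| ^ q)) ^ (p / q)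
            * (∫ x in Ω, (‖fderiv ℝ c x‖ ^ p + |c x| ^ p))
    (∫ x in Ω, (‖fderiv ℝ u x‖ ^ p + |u x| ^ p))
        - (∫ x in Ω, (‖fderiv ℝ U x‖ ^ p + |U x| ^ p)) ≥ gap ∧ 0 < gap :=
  hump_destruction_quantitative_general n Ω hΩ_open p q hp hpq a b c ha_diff hb_diff hc_diff ha_W
    hb_W hc_W hab hac hbc hb_ne hc_ne hratio
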